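/- If the left class of the weak factorisation system on Set cofibrantly generated by the single map ∅ → {*} is closed under arbitrary coproducts, then the axiom of choice holds. -/

import Mathlib

/-!
The coproduct of `α` copies of `∅ → {*}` is `∅ → α`. A lift of `∅ → α` against the surjection
`Σ a, S a → α` is a section of the projection, i.e. a choice function for `S`.
The argument uses no choice (`propext` and `Quot.sound` only).
-/

universe u

/-- A map `f : A → B` of sets lies in the left class of the weak factorisation system on
`Set` cofibrantly generated by `∅ → {*}` precisely when it has the left lifting property
against every surjection (the right class being exactly the surjections). -/
def LlpAgainstSurjections {A B : Type u} (f : A → B) : Prop :=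
  ∀ {C D : Type u} (p : C → D), Function.Surjective p →
    ∀ (top : A → C) (bot : B → D), p ∘ top = bot ∘ f →
      ∃ l : B → C, l ∘ f = top ∧ p ∘ l = bot

theorem llpAgainstSurjections_of_isEmpty_of_unique {A B : Type u} [IsEmpty A] [Unique B]
    (f : A → B) : LlpAgainstSurjections f := by
  intro C D p hp top bot _
  obtain ⟨c, hc⟩ := hp (bot default)
  exact ⟨fun _ => c, funext isEmptyElim, funext fun b => by rw [Unique.eq_default b]; exact hc⟩

theorem LlpAgainstSurjections.exists_lift_of_isEmpty {A B C D : Type u} [IsEmpty A]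
    {f : A → B} (hf : LlpAgainstSurjections f) {p : C → D} (hp : Function.Surjective p)
    (g : B → D) : ∃ l : B → C, p ∘ l = g := by
  obtain ⟨l, -, hl⟩ := hf p hp isEmptyElim g (funext isEmptyElim)
  exact ⟨l, hl⟩

theorem Sigma.nonempty_pi_of_fst_eq {α : Type*} {S : α → Type*} (s : α → Sigma S)
    (hs : ∀ a, (s a).1 = a) : Nonempty (∀ a, S a) :=
  ⟨fun a => hs a ▸ (s a).2⟩

/-- If the left class of the weak factorisation system on `Set`
cofibrantly generated by `∅ → {*}` is closed under arbitrary coproducts (i.e. a coproduct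
of maps each having the left lifting property against all surjections again has that
lifting property), then the axiom of choice holds. -/
theorem axiomOfChoice_of_leftClass_closed_under_coproducts
    (H : ∀ {ι : Type u} (A B : ι → Type u) (f : ∀ i, A i → B i),
      (∀ i, LlpAgainstSurjections (f i)) →
      LlpAgainstSurjections (fun x : Sigma A => (⟨x.1, f x.1 x.2⟩ : Sigma B))) :
    ∀ {α : Type u} (S : α → Type u), (∀ a, Nonempty (S a)) → Nonempty (∀ a, S a) := by
  intro α S hS
  have hcoprod : LlpAgainstSurjections
      (fun x : Σ _ : α, PEmpty.{u + 1} => (⟨x.1, PUnit.unit⟩ : Σ _ : α, PUnit.{u + 1})) :=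
    H _ _ (fun _ => isEmptyElim) fun _ => llpAgainstSurjections_of_isEmpty_of_unique _
  have : IsEmpty (Σ _ : α, PEmpty.{u + 1}) := isEmpty_sigma.2 inferInstance
  obtain ⟨l, hl⟩ := hcoprod.exists_lift_of_isEmpty (Sigma.fst_surjective_iff.mpr hS) Sigma.fst
  exact Sigma.nonempty_pi_of_fst_eq (fun a => l ⟨a, PUnit.unit⟩)
    fun a => congrFun hl ⟨a, PUnit.unit⟩
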